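/- Under assumption A1, let μ ∈ (0, 1] and x ∈ F_p⁰ satisfy δ(x, μ) ≤ 1/2. Then for any fixed x' ∈ F_p⁰ and (y', s') ∈ F_d⁰, one has min_{1≤j≤n} x_j ≥ αμ where α = 0.1·(min_{1≤j≤n} x'_j) / (n + ⟨x', s'⟩) > 0. -/

import Mathlib

/-!
Near the central path the products `x_j s_j` lie in `[μ/2, 3μ/2]` for a suitable dual slack `s`,
so `x_j ≥ μ / (2 s_j)` and it suffices to bound `s_j` from above. Since `x - x'` lies in the
kernel of `A` and `s - s'` in the range of `Aᵀ`, they are orthogonal, which gives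
`x' ⬝ s ≤ x ⬝ s + x' ⬝ s' ≤ 3μn/2 + x' ⬝ s'`, and hence `(min_j x'_j) s_j ≤ 3μn/2 + x' ⬝ s'`.
-/

open Matrix

noncomputable def enorm {ι : Type*} [Fintype ι] (v : ι → ℝ) : ℝ :=
  Real.sqrt (∑ i, (v i) ^ 2)

noncomputable def opNorm {ι κ : Type*} [Fintype ι] [Fintype κ]
    (M : Matrix ι κ ℝ) : ℝ :=
  sSup {r : ℝ | ∃ v : κ → ℝ, _root_.enorm v ≤ 1 ∧ r = _root_.enorm (M *ᵥ v)}

noncomputable def lambdaMin {ι : Type*} [Fintype ι] (M : Matrix ι ι ℝ) : ℝ :=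
  sInf {r : ℝ | ∃ v : ι → ℝ, _root_.enorm v = 1 ∧ r = v ⬝ᵥ (M *ᵥ v)}

noncomputable def lambdaMax {ι : Type*} [Fintype ι] (M : Matrix ι ι ℝ) : ℝ :=
  sSup {r : ℝ | ∃ v : ι → ℝ, _root_.enorm v = 1 ∧ r = v ⬝ᵥ (M *ᵥ v)}

noncomputable def condNum {ι : Type*} [Fintype ι] (M : Matrix ι ι ℝ) : ℝ :=
  lambdaMax M / lambdaMin M

noncomputable def gradProj {m n : ℕ} (B : Matrix (Fin m) (Fin n) ℝ) :
    Matrix (Fin n) (Fin n) ℝ :=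
  1 - Bᵀ * (B * Bᵀ)⁻¹ * B

/-- The proximity measure `δ(x, μ) = ‖P_{AX}((1/μ) X c - e)‖`. -/
noncomputable def prox {m n : ℕ} (A : Matrix (Fin m) (Fin n) ℝ)
    (c x : Fin n → ℝ) (μ : ℝ) : ℝ :=
  enorm (gradProj (A * Matrix.diagonal x) *ᵥ (μ⁻¹ • (Matrix.diagonal x *ᵥ c) - 1))

/-- The proximity measure as `min_{(y,s) ∈ F_d} ‖(1/μ) X s - e‖`. -/
noncomputable def proxMin {m n : ℕ} (A : Matrix (Fin m) (Fin n) ℝ)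
    (c x : Fin n → ℝ) (μ : ℝ) : ℝ :=
  sInf {r : ℝ | ∃ (y : Fin m → ℝ) (s : Fin n → ℝ),
    Aᵀ *ᵥ y + s = c ∧ (∀ i, 0 ≤ s i) ∧
    r = _root_.enorm (μ⁻¹ • (Matrix.diagonal x *ᵥ s) - 1)}

/-- The primal normal matrix `A X² Aᵀ` is positive semidefinite. -/
theorem normalPSD {m n : ℕ} (A : Matrix (Fin m) (Fin n) ℝ) (x : Fin n → ℝ) :
    (A * Matrix.diagonal x ^ 2 * Aᵀ).PosSemidef := by
  have h : A * Matrix.diagonal x ^ 2 * Aᵀ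
      = (A * Matrix.diagonal x) * (A * Matrix.diagonal x)ᴴ := by
    rw [Matrix.conjTranspose_mul, Matrix.conjTranspose_eq_transpose_of_trivial,
      Matrix.conjTranspose_eq_transpose_of_trivial, Matrix.diagonal_transpose, pow_two,
      Matrix.mul_assoc, Matrix.mul_assoc, Matrix.mul_assoc]
  rw [h]
  exact Matrix.posSemidef_self_mul_conjTranspose _

lemma abs_apply_le_enorm {ι : Type*} [Fintype ι] (v : ι → ℝ) (j : ι) :
    |v j| ≤ _root_.enorm v := by
  rw [← Real.sqrt_sq_eq_abs]
  exact Real.sqrt_le_sqrt (Finset.single_le_sum (fun i _ => sq_nonneg (v i)) (Finset.mem_univ j))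

lemma mul_mem_Icc_of_enorm_le {ι : Type*} [Fintype ι] [DecidableEq ι] {μ r : ℝ} (hμ : 0 < μ)
    {x s : ι → ℝ} (h : _root_.enorm (μ⁻¹ • (diagonal x *ᵥ s) - 1) ≤ r) (j : ι) :
    x j * s j ∈ Set.Icc (μ * (1 - r)) (μ * (1 + r)) := by
  have hj := (abs_apply_le_enorm _ j).trans h
  simp only [Pi.sub_apply, Pi.smul_apply, mulVec_diagonal, smul_eq_mul, Pi.one_apply,
    abs_le] at hj
  have hxs : x j * s j = μ * (μ⁻¹ * (x j * s j)) := by field_simp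
  constructor <;> rw [hxs] <;> nlinarith

lemma dotProduct_sub_sub_eq_zero {R m n : Type*} [CommRing R] [Fintype m] [Fintype n]
    {A : Matrix m n R} {b : m → R} {c x x' s s' : n → R} {y y' : m → R}
    (hx : A *ᵥ x = b) (hx' : A *ᵥ x' = b) (hs : Aᵀ *ᵥ y + s = c) (hs' : Aᵀ *ᵥ y' + s' = c) :
    (x - x') ⬝ᵥ (s - s') = 0 := by
  have hss' : s - s' = Aᵀ *ᵥ (y' - y) := by
    rw [eq_sub_of_add_eq' hs, eq_sub_of_add_eq' hs', mulVec_sub]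
    abel
  rw [hss', dotProduct_mulVec, vecMul_transpose, mulVec_sub, hx, hx', sub_self, zero_dotProduct]

lemma dotProduct_le_add_of_feasible {R m n : Type*} [CommRing R] [PartialOrder R]
    [IsOrderedRing R] [Fintype m] [Fintype n] {A : Matrix m n R} {b : m → R}
    {c x x' s s' : n → R} {y y' : m → R} (hx : A *ᵥ x = b) (hx' : A *ᵥ x' = b)
    (hs : Aᵀ *ᵥ y + s = c) (hs' : Aᵀ *ᵥ y' + s' = c) (hxs' : 0 ≤ x ⬝ᵥ s') :
    x' ⬝ᵥ s ≤ x ⬝ᵥ s + x' ⬝ᵥ s' := by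
  have horth := dotProduct_sub_sub_eq_zero hx hx' hs hs'
  rw [sub_dotProduct, dotProduct_sub, dotProduct_sub] at horth
  rw [show x' ⬝ᵥ s = x ⬝ᵥ s + x' ⬝ᵥ s' - x ⬝ᵥ s' by linear_combination -horth]
  exact sub_le_self _ hxs'

lemma iInf_mul_le_dotProduct {ι : Type*} [Fintype ι] {v w : ι → ℝ} (hv : 0 ≤ v) (hw : 0 ≤ w)
    (j : ι) : (⨅ i, v i) * w j ≤ v ⬝ᵥ w :=
  calc (⨅ i, v i) * w j ≤ v j * w j :=
        mul_le_mul_of_nonneg_right (ciInf_le (Finite.bddBelow_range v) j) (hw j)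
    _ ≤ v ⬝ᵥ w := Finset.single_le_sum (fun i _ => mul_nonneg (hv i) (hw i)) (Finset.mem_univ j)

/-- With `y = μ (AX²Aᵀ)⁻¹ AX v`, where `v = Xc/μ - e`, the scaled slack `Xs/μ - e` of
`s = c - Aᵀy` is exactly `P_{AX} v`; the identity is purely algebraic, so it holds even when
`AX²Aᵀ` is singular and `⁻¹` is Mathlib's junk inverse. -/
lemma exists_dual_slack_enorm_eq_prox {m n : ℕ} (A : Matrix (Fin m) (Fin n) ℝ)
    (c x : Fin n → ℝ) {μ : ℝ} (hμ : μ ≠ 0) :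
    ∃ (y : Fin m → ℝ) (s : Fin n → ℝ), Aᵀ *ᵥ y + s = c ∧
      _root_.enorm (μ⁻¹ • (diagonal x *ᵥ s) - 1) = prox A c x μ := by
  set B := A * diagonal x
  set v : Fin n → ℝ := μ⁻¹ • (diagonal x *ᵥ c) - 1
  set y : Fin m → ℝ := μ • ((B * Bᵀ)⁻¹ *ᵥ (B *ᵥ v))
  refine ⟨y, c - Aᵀ *ᵥ y, add_sub_cancel _ _, ?_⟩
  have hXAt : diagonal x *ᵥ (Aᵀ *ᵥ y) = Bᵀ *ᵥ y := by
    rw [transpose_mul, diagonal_transpose, ← mulVec_mulVec]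
  have hproj : μ⁻¹ • (diagonal x *ᵥ (c - Aᵀ *ᵥ y)) - 1 = gradProj B *ᵥ v := by
    rw [gradProj, sub_mulVec, one_mulVec, mulVec_sub, hXAt, mulVec_smul, smul_sub, smul_smul,
      inv_mul_cancel₀ hμ, one_smul, mulVec_mulVec, mulVec_mulVec, ← Matrix.mul_assoc]
    simp only [v, B]
    abel
  rw [hproj]
  rfl

theorem stmt_6_general {m n : ℕ} (A : Matrix (Fin m) (Fin n) ℝ) (b : Fin m → ℝ) (c : Fin n → ℝ)
    (hn : 0 < n)
    (μ : ℝ) (hμ0 : 0 < μ) (hμ1 : μ ≤ 1)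
    (x : Fin n → ℝ) (hxfeas : A *ᵥ x = b) (hxpos : ∀ i, 0 < x i)
    (hδ : prox A c x μ ≤ 1 / 2)
    (x' : Fin n → ℝ) (hx'feas : A *ᵥ x' = b) (hx'pos : ∀ i, 0 < x' i)
    (y' : Fin m → ℝ) (s' : Fin n → ℝ)
    (hd'feas : Aᵀ *ᵥ y' + s' = c) (hs'pos : ∀ i, 0 < s' i) :
    0 < 0.1 * sInf (Set.range x') / (n + x' ⬝ᵥ s') ∧
    ∀ j, 0.1 * sInf (Set.range x') / (n + x' ⬝ᵥ s') * μ ≤ x j := by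
  have : Nonempty (Fin n) := ⟨⟨0, hn⟩⟩
  obtain ⟨y, s, hdfeas, hnorm⟩ := exists_dual_slack_enorm_eq_prox A c x hμ0.ne'
  have hxs := mul_mem_Icc_of_enorm_le hμ0 (hnorm.trans_le hδ)
  have hspos : ∀ j, 0 < s j := fun j =>
    pos_of_mul_pos_right (by nlinarith [(hxs j).1]) (hxpos j).le
  have hxs_le : x ⬝ᵥ s ≤ n * (μ * (1 + 1 / 2)) := by
    simpa [dotProduct] using Finset.sum_le_card_nsmul Finset.univ _ _ fun i _ => (hxs i).2
  have hx's_le : x' ⬝ᵥ s ≤ 3 / 2 * μ * n + x' ⬝ᵥ s' :=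
    (dotProduct_le_add_of_feasible hxfeas hx'feas hdfeas hd'feas
      (dotProduct_nonneg_of_nonneg (fun i => (hxpos i).le) (fun i => (hs'pos i).le))).trans
      (by linarith)
  set mx := sInf (Set.range x')
  obtain ⟨j0, hj0⟩ := exists_eq_ciInf_of_finite (f := x')
  have hmx_pos : 0 < mx := (hx'pos j0).trans_eq hj0
  have hg : 0 ≤ x' ⬝ᵥ s' :=
    dotProduct_nonneg_of_nonneg (fun i => (hx'pos i).le) (fun i => (hs'pos i).le)
  refine ⟨by positivity, fun j => ?_⟩
  have hmx_s : mx * s j ≤ x' ⬝ᵥ s :=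
    iInf_mul_le_dotProduct (fun i => (hx'pos i).le) (fun i => (hspos i).le) j
  rw [div_mul_eq_mul_div, div_le_iff₀ (by positivity)]
  calc 0.1 * mx * μ ≤ mx * (x j * s j) / 5 := by nlinarith [(hxs j).1]
    _ = mx * s j * x j / 5 := by ring
    _ ≤ (3 / 2 * μ * n + x' ⬝ᵥ s') * x j / 5 := by
        gcongr
        · exact (hxpos j).le
        · exact hmx_s.trans hx's_le
    _ ≤ x j * (n + x' ⬝ᵥ s') := by
        have hxj := (hxpos j).le
        nlinarith [mul_nonneg (mul_nonneg hxj (sub_nonneg.2 hμ1)) (Nat.cast_nonneg (α := ℝ) n),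
          mul_nonneg hxj (Nat.cast_nonneg (α := ℝ) n), mul_nonneg hxj hg]

/-- coordinatewise lower bound `min_j x_j ≥ αμ` for points near
the central path. -/
theorem stmt_6 {m n : ℕ} (A : Matrix (Fin m) (Fin n) ℝ) (b : Fin m → ℝ) (c : Fin n → ℝ)
    (hn : 0 < n)
    -- Assumption A1: nonempty primal and dual interiors, full row rank
    (hrank : A.rank = m)
    (hFp0 : ∃ x0 : Fin n → ℝ, A *ᵥ x0 = b ∧ ∀ i, 0 < x0 i)
    (hFd0 : ∃ (y0 : Fin m → ℝ) (s0 : Fin n → ℝ), Aᵀ *ᵥ y0 + s0 = c ∧ ∀ i, 0 < s0 i)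
    (μ : ℝ) (hμ0 : 0 < μ) (hμ1 : μ ≤ 1)
    (x : Fin n → ℝ) (hxfeas : A *ᵥ x = b) (hxpos : ∀ i, 0 < x i)
    (hδ : prox A c x μ ≤ 1 / 2)
    (x' : Fin n → ℝ) (hx'feas : A *ᵥ x' = b) (hx'pos : ∀ i, 0 < x' i)
    (y' : Fin m → ℝ) (s' : Fin n → ℝ)
    (hd'feas : Aᵀ *ᵥ y' + s' = c) (hs'pos : ∀ i, 0 < s' i) :
    0 < 0.1 * sInf (Set.range x') / (n + x' ⬝ᵥ s') ∧
    ∀ j, 0.1 * sInf (Set.range x') / (n + x' ⬝ᵥ s') * μ ≤ x j :=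
  stmt_6_general A b c hn μ hμ0 hμ1 x hxfeas hxpos hδ x' hx'feas hx'pos y' s' hd'feas hs'pos
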